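/- If a bipartite quantum state ρ on C^n ⊗ C^n is separable, then for every l with 1 ≤ l ≤ ⌊(d−1)/2⌋ the modified Hankel matrix B̂_l(r), i.e. the (l+1)×(l+1) matrix whose (i,j) entry is r_{i+j+1}(ρ) for i+j+1 ≠ 1 and equals 1 for i = j = 0 (i,j = 0,1,…,l), is positive semidefinite. -/

import Mathlib

open Matrix Kronecker
open scoped ComplexOrder

/-- The realignment `R(M)` of a matrix on `ℂ^n ⊗ ℂ^n`:
`R(M)_{(i,j),(k,l)} = M_{(i,k),(j,l)}`. -/
def realign {n : ℕ} (M : Matrix (Fin n × Fin n) (Fin n × Fin n) ℂ) :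
    Matrix (Fin n × Fin n) (Fin n × Fin n) ℂ :=
  fun p q => M (p.1, q.1) (p.2, q.2)

/-- The `k`-th realignment moment `r_k(ρ) = Tr(Y^k)` where
`Y = (R(ρ) R(ρ)†)^{1/2}` is the positive semidefinite square root of `R(ρ) R(ρ)†`. -/
noncomputable def rMoment {n : ℕ} (ρ : Matrix (Fin n × Fin n) (Fin n × Fin n) ℂ) (k : ℕ) : ℝ :=
  ((((Matrix.posSemidef_self_mul_conjTranspose (realign ρ)).1.eigenvectorUnitary.1 *
      diagonal (((↑) : ℝ → ℂ) ∘ (√·) ∘ (Matrix.posSemidef_self_mul_conjTranspose (realign ρ)).1.eigenvalues) *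
      (star (Matrix.posSemidef_self_mul_conjTranspose (realign ρ)).1.eigenvectorUnitary :
        Matrix (Fin n × Fin n) (Fin n × Fin n) ℂ)) ^ k).trace).re

/-- A bipartite state on `ℂ^n ⊗ ℂ^n` is separable if it is a finite convex mixture
of tensor products of (trace-one, positive semidefinite) states. -/
def SeparableState {n : ℕ} (ρ : Matrix (Fin n × Fin n) (Fin n × Fin n) ℂ) : Prop :=
  ∃ (T : ℕ) (p : Fin T → ℝ) (σ τ : Fin T → Matrix (Fin n) (Fin n) ℂ),
    (∀ t, 0 ≤ p t) ∧ (∑ t, p t = 1) ∧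
    (∀ t, (σ t).PosSemidef ∧ (σ t).trace = 1) ∧
    (∀ t, (τ t).PosSemidef ∧ (τ t).trace = 1) ∧
    ρ = ∑ t, (p t : ℂ) • (σ t ⊗ₖ τ t)

section Helpers

variable {ι : Type*} [Fintype ι] [DecidableEq ι]

lemma unitary_conj_trace (U : Matrix.unitaryGroup ι ℂ) (d : ι → ℂ) :
    ((U : Matrix ι ι ℂ) * Matrix.diagonal d * star (U : Matrix ι ι ℂ)).trace = ∑ i, d i := by
  rw [Matrix.trace_mul_cycle, Matrix.UnitaryGroup.star_mul_self U,
    Matrix.one_mul, Matrix.trace_diagonal]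

lemma unitary_conj_mul (U : Matrix.unitaryGroup ι ℂ) (a b : ι → ℂ) :
    ((U : Matrix ι ι ℂ) * Matrix.diagonal a * star (U : Matrix ι ι ℂ)) *
      ((U : Matrix ι ι ℂ) * Matrix.diagonal b * star (U : Matrix ι ι ℂ)) =
    (U : Matrix ι ι ℂ) * Matrix.diagonal (fun i => a i * b i) * star (U : Matrix ι ι ℂ) := by
  have h : star (U : Matrix ι ι ℂ) * (U : Matrix ι ι ℂ) = 1 :=
    Matrix.UnitaryGroup.star_mul_self U
  calc ((U : Matrix ι ι ℂ) * Matrix.diagonal a * star (U : Matrix ι ι ℂ)) *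
      ((U : Matrix ι ι ℂ) * Matrix.diagonal b * star (U : Matrix ι ι ℂ))
      = (U : Matrix ι ι ℂ) * Matrix.diagonal a *
          ((star (U : Matrix ι ι ℂ) * (U : Matrix ι ι ℂ)) *
            (Matrix.diagonal b * star (U : Matrix ι ι ℂ))) := by
        simp only [Matrix.mul_assoc]
    _ = (U : Matrix ι ι ℂ) * (Matrix.diagonal a * Matrix.diagonal b) *
          star (U : Matrix ι ι ℂ) := by
        rw [h, Matrix.one_mul]; simp only [Matrix.mul_assoc]
    _ = _ := by rw [Matrix.diagonal_mul_diagonal]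

lemma unitary_conj_posSemidef (U : Matrix.unitaryGroup ι ℂ) (d : ι → ℝ) (hd : ∀ i, 0 ≤ d i) :
    ((U : Matrix ι ι ℂ) * Matrix.diagonal (fun i => (d i : ℂ)) *
      star (U : Matrix ι ι ℂ)).PosSemidef := by
  have hdiag : (Matrix.diagonal (fun i => (d i : ℂ))).PosSemidef :=
    Matrix.posSemidef_diagonal_iff.mpr fun i => Complex.zero_le_real.mpr (hd i)
  simpa [Matrix.star_eq_conjTranspose] using
    hdiag.mul_mul_conjTranspose_same (U : Matrix ι ι ℂ)

lemma posSemidef_trace_re_nonneg {M : Matrix ι ι ℂ} (hM : M.PosSemidef) : 0 ≤ M.trace.re := by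
  have htr : M.trace = ∑ i, M i i := rfl
  rw [htr, Complex.re_sum]
  refine Finset.sum_nonneg fun i _ => ?_
  have := hM.re_dotProduct_nonneg (Pi.single i 1)
  simpa [dotProduct, Matrix.mulVec, Pi.single_apply, Finset.mul_sum] using this

lemma re_dot_le (w v : ι → ℂ) :
    (w ⬝ᵥ v).re ≤ ((star w ⬝ᵥ w).re + (star v ⬝ᵥ v).re) / 2 := by
  have h1 : (star w ⬝ᵥ w).re = ∑ i, ‖w i‖ ^ 2 := by
    rw [dotProduct, Complex.re_sum]
    refine Finset.sum_congr rfl fun i _ => ?_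
    simp [Pi.star_apply, ← Complex.normSq_eq_norm_sq, ← Complex.normSq_eq_conj_mul_self]
  have h2 : (star v ⬝ᵥ v).re = ∑ i, ‖v i‖ ^ 2 := by
    rw [dotProduct, Complex.re_sum]
    refine Finset.sum_congr rfl fun i _ => ?_
    simp [Pi.star_apply, ← Complex.normSq_eq_norm_sq, ← Complex.normSq_eq_conj_mul_self]
  rw [h1, h2, dotProduct, Complex.re_sum]
  calc ∑ i, (w i * v i).re
      ≤ ∑ i, (‖w i‖ ^ 2 + ‖v i‖ ^ 2) / 2 := by
        refine Finset.sum_le_sum fun i _ => ?_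
        have hr := Complex.re_le_norm (w i * v i)
        have h3 : ‖w i * v i‖ = ‖w i‖ * ‖v i‖ :=
          norm_mul _ _
        nlinarith [sq_nonneg (‖w i‖ - ‖v i‖)]
    _ = (∑ i, ‖w i‖ ^ 2 + ∑ i, ‖v i‖ ^ 2) / 2 := by
        rw [← Finset.sum_div, Finset.sum_add_distrib]

lemma trace_mul_vecMulVec (X : Matrix ι ι ℂ) (u w : ι → ℂ) :
    (X * Matrix.vecMulVec u w).trace = w ⬝ᵥ (X *ᵥ u) := by
  have h1 : (X * Matrix.vecMulVec u w).trace = ∑ a, ∑ b, X a b * (u b * w a) := by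
    simp [Matrix.trace, Matrix.diag, Matrix.mul_apply, Matrix.vecMulVec_apply]
  rw [h1, dotProduct]
  refine Finset.sum_congr rfl fun a _ => ?_
  simp only [Matrix.mulVec, dotProduct, Finset.mul_sum]
  refine Finset.sum_congr rfl fun a _ => by ring

lemma hankel_quadform_nonneg {Y : Matrix ι ι ℂ} (hY : Y.PosSemidef) {m : ℕ} (x : Fin m → ℝ) :
    0 ≤ ∑ i : Fin m, ∑ j : Fin m, x i * x j * ((Y ^ ((i : ℕ) + (j : ℕ) + 1)).trace).re := by
  set S : Matrix ι ι ℂ := ∑ i : Fin m, (x i : ℂ) • Y ^ (i : ℕ) with hS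
  have hSH : Sᴴ = S := by
    rw [hS, Matrix.conjTranspose_sum]
    refine Finset.sum_congr rfl fun i _ => ?_
    rw [Matrix.conjTranspose_smul, (hY.isHermitian.pow _).eq]
    norm_num
  have h1 : S * Y = ∑ i : Fin m, (x i : ℂ) • Y ^ ((i : ℕ) + 1) := by
    rw [hS, Finset.sum_mul]
    exact Finset.sum_congr rfl fun i _ => by rw [smul_mul_assoc, ← pow_succ]
  have key : S * Y * S =
      ∑ i : Fin m, ∑ j : Fin m, ((x i * x j : ℝ) : ℂ) • Y ^ ((i : ℕ) + (j : ℕ) + 1) := by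
    rw [h1, Finset.sum_mul]
    refine Finset.sum_congr rfl fun i _ => ?_
    rw [hS, Finset.mul_sum]
    refine Finset.sum_congr rfl fun j _ => ?_
    have hij : (i : ℕ) + 1 + (j : ℕ) = (i : ℕ) + (j : ℕ) + 1 := by omega
    rw [smul_mul_assoc, mul_smul_comm, smul_smul, ← pow_add, hij]
    norm_cast
  have hpsd : (S * Y * S).PosSemidef := by
    have h := hY.mul_mul_conjTranspose_same S
    rwa [hSH] at h
  have h0 := posSemidef_trace_re_nonneg hpsd
  rw [key] at h0
  simpa [Matrix.trace_sum, Matrix.trace_smul, Complex.re_sum, smul_eq_mul,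
    Complex.re_ofReal_mul, mul_assoc] using h0

end Helpers

lemma frob_le_one {k : ℕ} {A : Matrix (Fin k) (Fin k) ℂ} (hA : A.PosSemidef)
    (h1 : A.trace = 1) :
    (star (fun q : Fin k × Fin k => A q.1 q.2) ⬝ᵥ (fun q : Fin k × Fin k => A q.1 q.2)).re ≤ 1 := by
  have hH := hA.1
  have hμ0 : ∀ i, 0 ≤ hH.eigenvalues i := hA.eigenvalues_nonneg
  have hspec : A = (hH.eigenvectorUnitary : Matrix _ _ ℂ) *
      Matrix.diagonal (fun i => ((hH.eigenvalues i : ℝ) : ℂ)) *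
      star (hH.eigenvectorUnitary : Matrix _ _ ℂ) := hH.spectral_theorem
  have htr : A.trace = ∑ i, ((hH.eigenvalues i : ℝ) : ℂ) := by
    conv_lhs => rw [hspec]
    exact unitary_conj_trace _ _
  have hμsum : ∑ i, hH.eigenvalues i = 1 := by
    rw [htr] at h1
    have := congrArg Complex.re h1
    simpa [Complex.re_sum] using this
  have hμle : ∀ i, hH.eigenvalues i ≤ 1 := by
    intro i
    rw [← hμsum]
    exact Finset.single_le_sum (fun j _ => hμ0 j) (Finset.mem_univ i)
  have hsq : (A * A).trace = ∑ i, ((hH.eigenvalues i : ℝ) : ℂ) * ((hH.eigenvalues i : ℝ) : ℂ) := by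
    conv_lhs => rw [hspec]
    rw [unitary_conj_mul]
    exact unitary_conj_trace _ _
  have hlhs : (star (fun q : Fin k × Fin k => A q.1 q.2) ⬝ᵥ
      (fun q : Fin k × Fin k => A q.1 q.2)) = (Aᴴ * A).trace := by
    rw [dotProduct]
    have : (Aᴴ * A).trace = ∑ j, ∑ i, star (A i j) * A i j := by
      simp [Matrix.trace, Matrix.diag, Matrix.mul_apply, Matrix.conjTranspose_apply]
    rw [this, Fintype.sum_prod_type]
    rw [Finset.sum_comm]
    rfl
  rw [hlhs, hA.1.eq, hsq]
  have : (∑ i, ((hH.eigenvalues i : ℝ) : ℂ) * ((hH.eigenvalues i : ℝ) : ℂ)).re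
      = ∑ i, hH.eigenvalues i * hH.eigenvalues i := by
    rw [Complex.re_sum]
    refine Finset.sum_congr rfl fun i _ => ?_
    rw [← Complex.ofReal_mul, Complex.ofReal_re]
  rw [this, ← hμsum]
  exact Finset.sum_le_sum fun i _ =>
    mul_le_of_le_one_right (hμ0 i) (hμle i)

lemma rMoment_one_le_one {n : ℕ} {ρ : Matrix (Fin n × Fin n) (Fin n × Fin n) ℂ}
    (hsep : SeparableState ρ) : rMoment ρ 1 ≤ 1 := by
  classical
  obtain ⟨T, p, σ, τ, hp, _hpsum, hσ, hτ, hρeq⟩ := hsep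
  set R : Matrix (Fin n × Fin n) (Fin n × Fin n) ℂ := realign ρ with hRdef
  have hR : (R * Rᴴ).PosSemidef := Matrix.posSemidef_self_mul_conjTranspose R
  set U : Matrix.unitaryGroup (Fin n × Fin n) ℂ := hR.1.eigenvectorUnitary with hU
  set lam : Fin n × Fin n → ℝ := hR.1.eigenvalues with hlamdef
  have hlam : ∀ i, 0 ≤ lam i := hR.eigenvalues_nonneg
  set s : Fin n × Fin n → ℝ := fun i => Real.sqrt (lam i) with hsdef
  have hss : ∀ i, s i * s i = lam i := fun i => Real.mul_self_sqrt (hlam i)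
  have hs0 : ∀ i, 0 ≤ s i := fun i => Real.sqrt_nonneg _
  have hspec : R * Rᴴ = (U : Matrix _ _ ℂ) * Matrix.diagonal (fun i => ((lam i : ℝ) : ℂ)) *
      star (U : Matrix _ _ ℂ) := hR.1.spectral_theorem
  have hPdef : ((U : Matrix _ _ ℂ) * Matrix.diagonal (fun i => ((s i : ℝ) : ℂ)) * star (U : Matrix _ _ ℂ)) = (U : Matrix _ _ ℂ) * Matrix.diagonal (fun i => ((s i : ℝ) : ℂ)) *
      star (U : Matrix _ _ ℂ) := rfl
  set Q : Matrix (Fin n × Fin n) (Fin n × Fin n) ℂ :=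
    (U : Matrix _ _ ℂ) * Matrix.diagonal (fun i => (((s i)⁻¹ : ℝ) : ℂ)) *
      star (U : Matrix _ _ ℂ) with hQ
  have hQpsd : Q.PosSemidef := unitary_conj_posSemidef U _ (fun i => inv_nonneg.mpr (hs0 i))
  set X := Rᴴ * Q with hX
  have hsl : ∀ i, lam i * (s i)⁻¹ = s i := by
    intro i
    by_cases h : s i = 0
    · rw [← hss i, h]; simp
    · rw [← hss i]; field_simp
  have htraceXR : (X * R).trace = ∑ i, ((s i : ℝ) : ℂ) := by
    rw [hX, Matrix.trace_mul_cycle, hspec, hQ, unitary_conj_mul, unitary_conj_trace]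
    refine Finset.sum_congr rfl fun i _ => ?_
    rw [← Complex.ofReal_mul, hsl i]
  have htrP : ((U : Matrix _ _ ℂ) * Matrix.diagonal (fun i => ((s i : ℝ) : ℂ)) * star (U : Matrix _ _ ℂ)).trace = ∑ i, ((s i : ℝ) : ℂ) := by
    rw [hPdef]; exact unitary_conj_trace U _
  have hXHX : Xᴴ * X = (U : Matrix _ _ ℂ) *
      Matrix.diagonal (fun i => (((s i)⁻¹ * lam i * (s i)⁻¹ : ℝ) : ℂ)) *
      star (U : Matrix _ _ ℂ) := by
    have hQH : Qᴴ = Q := hQpsd.1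
    rw [hX, Matrix.conjTranspose_mul, hQH, Matrix.conjTranspose_conjTranspose]
    have hassoc : Q * R * (Rᴴ * Q) = Q * (R * Rᴴ) * Q := by
      simp only [Matrix.mul_assoc]
    rw [hassoc, hspec, hQ, unitary_conj_mul, unitary_conj_mul]
    congr 1
    · congr 1
      funext i
      push_cast
      ring
  have hid : (1 : Matrix (Fin n × Fin n) (Fin n × Fin n) ℂ) =
      (U : Matrix _ _ ℂ) * Matrix.diagonal (fun i => ((1 : ℝ) : ℂ)) * star (U : Matrix _ _ ℂ) := by
    have h1d : Matrix.diagonal (fun _ : Fin n × Fin n => ((1 : ℝ) : ℂ)) = 1 := by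
      simp [Matrix.diagonal_one]
    rw [h1d, Matrix.mul_one]
    exact (U.2.2).symm
  have hone : (1 : Matrix (Fin n × Fin n) (Fin n × Fin n) ℂ) - Xᴴ * X =
      (U : Matrix _ _ ℂ) *
        Matrix.diagonal (fun i => ((1 - (s i)⁻¹ * lam i * (s i)⁻¹ : ℝ) : ℂ)) *
        star (U : Matrix _ _ ℂ) := by
    rw [hXHX]
    conv_lhs => rw [hid]
    rw [← Matrix.sub_mul, ← Matrix.mul_sub, Matrix.diagonal_sub]
    congr 1
    congr 1
    funext i
    push_cast
    ring
  have hcontract : ((1 : Matrix (Fin n × Fin n) (Fin n × Fin n) ℂ) - Xᴴ * X).PosSemidef := by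
    rw [hone]
    refine unitary_conj_posSemidef U _ fun i => ?_
    by_cases h : s i = 0
    · have : lam i = 0 := by rw [← hss i, h, mul_zero]
      simp [h, this]
    · have he : (s i)⁻¹ * lam i * (s i)⁻¹ = 1 := by
        rw [← hss i]; field_simp
      rw [he]; norm_num
  have hXu : ∀ u : (Fin n × Fin n) → ℂ,
      (star (X *ᵥ u) ⬝ᵥ (X *ᵥ u)).re ≤ (star u ⬝ᵥ u).re := by
    intro u
    have h0 := hcontract.dotProduct_mulVec_nonneg u
    have h0re := (Complex.le_def.mp h0).1
    rw [Matrix.sub_mulVec, dotProduct_sub, Matrix.one_mulVec, Complex.sub_re] at h0re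
    have hid2 : star u ⬝ᵥ ((Xᴴ * X) *ᵥ u) = star (X *ᵥ u) ⬝ᵥ (X *ᵥ u) := by
      rw [← Matrix.mulVec_mulVec, Matrix.dotProduct_mulVec, ← Matrix.star_mulVec]
    rw [hid2] at h0re
    simpa using h0re
  set u : Fin T → (Fin n × Fin n) → ℂ := fun t q => σ t q.1 q.2 with hu
  set w : Fin T → (Fin n × Fin n) → ℂ := fun t q => τ t q.1 q.2 with hw
  have hRsum : R = ∑ t, (p t : ℂ) • Matrix.vecMulVec (u t) (w t) := by
    rw [hRdef, hρeq]
    apply Matrix.ext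
    intro q r
    simp [realign, Matrix.sum_apply, Matrix.vecMulVec_apply, hu, hw,
      Matrix.kroneckerMap_apply, smul_eq_mul]
  have hexp : (X * R).trace = ∑ t, (p t : ℂ) * (w t ⬝ᵥ (X *ᵥ u t)) := by
    rw [hRsum, Finset.mul_sum, Matrix.trace_sum]
    refine Finset.sum_congr rfl fun t _ => ?_
    rw [Matrix.mul_smul, Matrix.trace_smul, trace_mul_vecMulVec, smul_eq_mul]
  have hterm : ∀ t, (w t ⬝ᵥ (X *ᵥ u t)).re ≤ 1 := by
    intro t
    have hw1 : (star (w t) ⬝ᵥ w t).re ≤ 1 := frob_le_one (hτ t).1 (hτ t).2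
    have hu1 : (star (u t) ⬝ᵥ u t).re ≤ 1 := frob_le_one (hσ t).1 (hσ t).2
    have h2 := re_dot_le (w t) (X *ᵥ u t)
    have h3 := hXu (u t)
    linarith
  have hgoal : rMoment ρ 1 = (((U : Matrix _ _ ℂ) * Matrix.diagonal (fun i => ((s i : ℝ) : ℂ)) * star (U : Matrix _ _ ℂ)).trace).re := by
    show (((U : Matrix _ _ ℂ) * Matrix.diagonal (fun i => ((s i : ℝ) : ℂ)) * star (U : Matrix _ _ ℂ)) ^ 1).trace.re = _
    rw [pow_one]
  rw [hgoal, htrP, ← htraceXR, hexp]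
  rw [Complex.re_sum]
  calc ∑ t, ((p t : ℂ) * (w t ⬝ᵥ (X *ᵥ u t))).re
      = ∑ t, p t * (w t ⬝ᵥ (X *ᵥ u t)).re := by
        refine Finset.sum_congr rfl fun t _ => Complex.re_ofReal_mul _ _
    _ ≤ ∑ t, p t * 1 := Finset.sum_le_sum fun t _ =>
        mul_le_mul_of_nonneg_left (hterm t) (hp t)
    _ = 1 := by simp [_hpsum]



/-- Theorem 2 (shifted-Hankel part): if `ρ` is separable, then for every
`1 ≤ l ≤ ⌊(d-1)/2⌋` (`d = n²`) the modified Hankel matrix `B̂_l(r)`, whose `(i,j)`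
entry is `r_{i+j+1}(ρ)` except that the `(0,0)` entry `r_1` is replaced by `1`,
is positive semidefinite. -/
theorem separable_modified_hankel_B_posSemidef {n : ℕ} (hn : 1 ≤ n)
    (ρ : Matrix (Fin n × Fin n) (Fin n × Fin n) ℂ)
    (hρ : ρ.PosSemidef) (hTr : ρ.trace = 1) (hsep : SeparableState ρ)
    (l : ℕ) (hl1 : 1 ≤ l) (hl2 : l ≤ (n ^ 2 - 1) / 2) :
    (Matrix.of fun i j : Fin (l + 1) =>
      if (i : ℕ) + (j : ℕ) + 1 = 1 then (1 : ℝ) else rMoment ρ ((i : ℕ) + (j : ℕ) + 1)).PosSemidef := by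
  have hr1 : rMoment ρ 1 ≤ 1 := rMoment_one_le_one hsep
  have hentry : ∀ i j : Fin (l + 1),
      (if (i : ℕ) + (j : ℕ) + 1 = 1 then (1 : ℝ) else rMoment ρ ((i : ℕ) + (j : ℕ) + 1))
        = rMoment ρ ((i : ℕ) + (j : ℕ) + 1) + (if i = 0 ∧ j = 0 then 1 - rMoment ρ 1 else 0) := by
    intro i j
    by_cases h : (i : ℕ) + (j : ℕ) + 1 = 1
    · have hi : i = 0 := by
        have : (i : ℕ) = 0 := by omega
        exact Fin.ext (by simpa using this)
      have hj : j = 0 := by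
        have : (j : ℕ) = 0 := by omega
        exact Fin.ext (by simpa using this)
      rw [if_pos h, if_pos ⟨hi, hj⟩, h]
      ring
    · have h2 : ¬(i = 0 ∧ j = 0) := by
        rintro ⟨rfl, rfl⟩
        simp at h
      rw [if_neg h, if_neg h2, add_zero]
  refine Matrix.PosSemidef.of_dotProduct_mulVec_nonneg ?_ ?_
  · show _ᴴ = _
    apply Matrix.ext
    intro i j
    simp only [Matrix.conjTranspose_apply, Matrix.of_apply, star_trivial]
    rw [Nat.add_comm (j : ℕ) (i : ℕ)]
  · intro x
    have hq := hankel_quadform_nonneg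
      (unitary_conj_posSemidef (Matrix.posSemidef_self_mul_conjTranspose (realign ρ)).1.eigenvectorUnitary
        (fun i => Real.sqrt ((Matrix.posSemidef_self_mul_conjTranspose (realign ρ)).1.eigenvalues i)) (fun i => Real.sqrt_nonneg _)) x
    have hrdef : ∀ k, rMoment ρ k
        = (((((Matrix.posSemidef_self_mul_conjTranspose (realign ρ)).1.eigenvectorUnitary : Matrix _ _ ℂ) *
          Matrix.diagonal (fun i => ((Real.sqrt ((Matrix.posSemidef_self_mul_conjTranspose (realign ρ)).1.eigenvalues i) : ℝ) : ℂ)) *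
          star ((Matrix.posSemidef_self_mul_conjTranspose (realign ρ)).1.eigenvectorUnitary : Matrix _ _ ℂ)) ^ k).trace).re :=
      fun k => rfl
    have hsplit : ∀ i j : Fin (l + 1),
        x i * ((Matrix.of fun i j : Fin (l + 1) =>
          if (i : ℕ) + (j : ℕ) + 1 = 1 then (1 : ℝ)
          else rMoment ρ ((i : ℕ) + (j : ℕ) + 1)) i j * x j)
        = x i * x j * rMoment ρ ((i : ℕ) + (j : ℕ) + 1)
          + (if i = 0 ∧ j = 0 then (1 - rMoment ρ 1) * (x 0 * x 0) else 0) := by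
      intro i j
      rw [Matrix.of_apply, hentry i j]
      by_cases h : i = 0 ∧ j = 0
      · obtain ⟨h1, h2⟩ := h
        subst h1; subst h2
        rw [if_pos ⟨rfl, rfl⟩, if_pos ⟨rfl, rfl⟩]
        ring
      · rw [if_neg h, if_neg h]
        ring
    have hform : star x ⬝ᵥ ((Matrix.of fun i j : Fin (l + 1) =>
        if (i : ℕ) + (j : ℕ) + 1 = 1 then (1 : ℝ)
        else rMoment ρ ((i : ℕ) + (j : ℕ) + 1)) *ᵥ x)
        = (∑ i : Fin (l + 1), ∑ j : Fin (l + 1),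
            x i * x j * rMoment ρ ((i : ℕ) + (j : ℕ) + 1))
          + (1 - rMoment ρ 1) * (x 0 * x 0) := by
      have h1 : star x ⬝ᵥ ((Matrix.of fun i j : Fin (l + 1) =>
          if (i : ℕ) + (j : ℕ) + 1 = 1 then (1 : ℝ)
          else rMoment ρ ((i : ℕ) + (j : ℕ) + 1)) *ᵥ x)
          = ∑ i : Fin (l + 1), ∑ j : Fin (l + 1),
              x i * ((Matrix.of fun i j : Fin (l + 1) =>
                if (i : ℕ) + (j : ℕ) + 1 = 1 then (1 : ℝ)
                else rMoment ρ ((i : ℕ) + (j : ℕ) + 1)) i j * x j) := by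
        simp [dotProduct, Matrix.mulVec, Finset.mul_sum]
      rw [h1]
      simp only [hsplit, Finset.sum_add_distrib]
      congr 1
      simp [ite_and, Finset.sum_ite_eq, Finset.sum_ite_eq']
    rw [hform]
    refine add_nonneg ?_ (mul_nonneg (by linarith) (mul_self_nonneg _))
    simp only [hrdef]
    exact hq
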